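/- arXiv:math/0211394 — 2 statements merged into one kernel-verified Lean document; each statement's English description precedes it below -/
import Mathlib

section
/- Let A be a finite abelian group of even order, and suppose A is isomorphic to a subgroup of C₂ × D_{2·4} or to a subgroup of C₂ × D_{2·6}. Then A is isomorphic to one of the following seven groups: C₂, C₄, C₆, C₂ × C₂, C₂ × C₄, C₂ × C₆, C₂ × C₂ × C₂. -/
abbrev IsOneOfSeven (A : Type*) [CommGroup A] : Prop :=
    Nonempty (A ≃* Multiplicative (ZMod 2)) ∨
    Nonempty (A ≃* Multiplicative (ZMod 4)) ∨
    Nonempty (A ≃* Multiplicative (ZMod 6)) ∨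
    Nonempty (A ≃* (Multiplicative (ZMod 2) × Multiplicative (ZMod 2))) ∨
    Nonempty (A ≃* (Multiplicative (ZMod 2) × Multiplicative (ZMod 4))) ∨
    Nonempty (A ≃* (Multiplicative (ZMod 2) × Multiplicative (ZMod 6))) ∨
    Nonempty (A ≃* (Multiplicative (ZMod 2) × Multiplicative (ZMod 2) ×
      Multiplicative (ZMod 2)))

def myPiCongrLeft {ι ι' : Type*} (M : ι → Type*) [∀ i, Mul (M i)] (e : ι ≃ ι') :
    (∀ i, M i) ≃* ∀ j, M (e.symm j) :=
  { Equiv.piCongrLeft' M e with map_mul' := fun _ _ => rfl }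

def myPiFin2 (M : Fin 2 → Type*) [∀ i, Mul (M i)] : (∀ i, M i) ≃* M 0 × M 1 where
  toFun f := (f 0, f 1)
  invFun p := Fin.cons p.1 (Fin.cons p.2 finZeroElim)
  left_inv f := funext fun i => by fin_cases i <;> rfl
  right_inv p := rfl
  map_mul' f g := rfl

def myPiFin3 (M : Fin 3 → Type*) [∀ i, Mul (M i)] : (∀ i, M i) ≃* M 0 × M 1 × M 2 where
  toFun f := (f 0, f 1, f 2)
  invFun p := Fin.cons p.1 (Fin.cons p.2.1 (Fin.cons p.2.2 finZeroElim))
  left_inv f := funext fun i => by fin_cases i <;> rfl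
  right_inv p := rfl
  map_mul' f g := rfl

def c6 : Multiplicative (ZMod 2) × Multiplicative (ZMod 3) ≃* Multiplicative (ZMod 6) :=
  (MulEquiv.prodMultiplicative (ZMod 2) (ZMod 3)).symm.trans
    (AddEquiv.toMultiplicative
      ((ZMod.chineseRemainder (show Nat.Coprime 2 3 by decide)).toAddEquiv.symm :
        ZMod 2 × ZMod 3 ≃+ ZMod 6))

section Outs
variable {A : Type*} [CommGroup A]

lemma out_2 (h : A ≃* Multiplicative (ZMod 2)) : IsOneOfSeven A := Or.inl ⟨h⟩
lemma out_4 (h : A ≃* Multiplicative (ZMod 4)) : IsOneOfSeven A := Or.inr (Or.inl ⟨h⟩)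
lemma out_6 (h : A ≃* Multiplicative (ZMod 6)) : IsOneOfSeven A := Or.inr (Or.inr (Or.inl ⟨h⟩))
lemma out_22 (h : A ≃* Multiplicative (ZMod 2) × Multiplicative (ZMod 2)) : IsOneOfSeven A :=
  Or.inr (Or.inr (Or.inr (Or.inl ⟨h⟩)))
lemma out_24 (h : A ≃* Multiplicative (ZMod 2) × Multiplicative (ZMod 4)) : IsOneOfSeven A :=
  Or.inr (Or.inr (Or.inr (Or.inr (Or.inl ⟨h⟩))))
lemma out_42 (h : A ≃* Multiplicative (ZMod 4) × Multiplicative (ZMod 2)) : IsOneOfSeven A :=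
  out_24 (h.trans MulEquiv.prodComm)
lemma out_26 (h : A ≃* Multiplicative (ZMod 2) × Multiplicative (ZMod 6)) : IsOneOfSeven A :=
  Or.inr (Or.inr (Or.inr (Or.inr (Or.inr (Or.inl ⟨h⟩)))))
lemma out_62 (h : A ≃* Multiplicative (ZMod 6) × Multiplicative (ZMod 2)) : IsOneOfSeven A :=
  out_26 (h.trans MulEquiv.prodComm)
lemma out_23 (h : A ≃* Multiplicative (ZMod 2) × Multiplicative (ZMod 3)) : IsOneOfSeven A :=
  out_6 (h.trans c6)
lemma out_32 (h : A ≃* Multiplicative (ZMod 3) × Multiplicative (ZMod 2)) : IsOneOfSeven A :=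
  out_23 (h.trans MulEquiv.prodComm)
lemma out_222 (h : A ≃* Multiplicative (ZMod 2) × Multiplicative (ZMod 2) ×
    Multiplicative (ZMod 2)) : IsOneOfSeven A :=
  Or.inr (Or.inr (Or.inr (Or.inr (Or.inr (Or.inr ⟨h⟩)))))
lemma out_223 (h : A ≃* Multiplicative (ZMod 2) × Multiplicative (ZMod 2) ×
    Multiplicative (ZMod 3)) : IsOneOfSeven A :=
  out_26 (h.trans (MulEquiv.prodCongr (MulEquiv.refl _) c6))
lemma out_232 (h : A ≃* Multiplicative (ZMod 2) × Multiplicative (ZMod 3) ×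
    Multiplicative (ZMod 2)) : IsOneOfSeven A :=
  out_223 (h.trans (MulEquiv.prodCongr (MulEquiv.refl _) MulEquiv.prodComm))
lemma out_322 (h : A ≃* Multiplicative (ZMod 3) × Multiplicative (ZMod 2) ×
    Multiplicative (ZMod 2)) : IsOneOfSeven A :=
  out_223 (h.trans (MulEquiv.prodComm.trans MulEquiv.prodAssoc))

end Outs

lemma dvd_four {m : ℕ} (h1 : 1 < m) (h : m ∣ 4) : m = 2 ∨ m = 4 := by
  have h2 := Nat.le_of_dvd (by norm_num) h
  interval_cases m <;> revert h <;> decide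

lemma dvd_six {m : ℕ} (h1 : 1 < m) (h : m ∣ 6) : m = 2 ∨ m = 3 ∨ m = 6 := by
  have h2 := Nat.le_of_dvd (by norm_num) h
  interval_cases m <;> revert h <;> decide

lemma card_mem16 {N : ℕ} (h2 : 2 ∣ N) (hd : N ∣ 16) (hne : N ≠ 16) :
    N = 2 ∨ N = 4 ∨ N = 6 ∨ N = 8 ∨ N = 12 := by
  have h1 := Nat.le_of_dvd (by norm_num) hd
  interval_cases N <;> revert h2 hd hne <;> decide

lemma card_mem24 {N : ℕ} (h2 : 2 ∣ N) (hd : N ∣ 24) (hne : N ≠ 24) :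
    N = 2 ∨ N = 4 ∨ N = 6 ∨ N = 8 ∨ N = 12 := by
  have h1 := Nat.le_of_dvd (by norm_num) hd
  interval_cases N <;> revert h2 hd hne <;> decide

set_option maxHeartbeats 2000000 in
lemma classify (A : Type*) [CommGroup A] [Finite A]
    (hpow : (∀ a : A, a ^ 4 = 1) ∨ (∀ a : A, a ^ 6 = 1))
    (hN : Nat.card A = 2 ∨ Nat.card A = 4 ∨ Nat.card A = 6 ∨ Nat.card A = 8 ∨
      Nat.card A = 12) :
    IsOneOfSeven A := by
  obtain ⟨E, hE, hp⟩ : ∃ E, (E = 4 ∨ E = 6) ∧ ∀ a : A, a ^ E = 1 := by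
    rcases hpow with h | h
    exacts [⟨4, Or.inl rfl, h⟩, ⟨6, Or.inr rfl, h⟩]
  obtain ⟨ι, hι, n, hn, ⟨F⟩⟩ := CommGroup.equiv_prod_multiplicative_zmod_of_finite A
  haveI := Classical.decEq ι
  have hBpow : ∀ b : ∀ i, Multiplicative (ZMod (n i)), b ^ E = 1 := fun b => by
    have h1 := hp (F.symm b)
    calc b ^ E = F ((F.symm b) ^ E) := by rw [map_pow, F.apply_symm_apply]
    _ = 1 := by rw [h1, map_one]
  have hq : ∀ i, n i ∣ E := fun i => by
    have h1 : orderOf (Pi.mulSingle i (Multiplicative.ofAdd (1 : ZMod (n i))) : ∀ j, Multiplicative (ZMod (n j))) = n i := by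
      rw [orderOf_piMulSingle, orderOf_ofAdd_eq_addOrderOf, ZMod.addOrderOf_one]
    exact h1 ▸ orderOf_dvd_of_pow_eq_one (hBpow _)
  have hNcard : ∏ i, n i = Nat.card A := by
    have hcM : ∀ i, Nat.card (Multiplicative (ZMod (n i))) = n i := fun i => by
      rw [Nat.card_congr Multiplicative.toAdd, Nat.card_zmod]
    rw [Nat.card_congr F.toEquiv, Nat.card_pi]
    exact Finset.prod_congr rfl fun i _ => (hcM i).symm
  have hk3 : Fintype.card ι ≤ 3 := by
    by_contra hk
    push_neg at hk
    have h2k : 2 ^ Fintype.card ι ≤ ∏ i, n i := by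
      rw [← Finset.card_univ, ← Finset.prod_const]
      exact Finset.prod_le_prod' fun i _ => hn i
    have h16 : (16 : ℕ) ≤ ∏ i, n i :=
      le_trans (le_trans (by norm_num) (Nat.pow_le_pow_right (by norm_num) hk)) h2k
    omega
  have hk : Fintype.card ι = 0 ∨ Fintype.card ι = 1 ∨ Fintype.card ι = 2 ∨
      Fintype.card ι = 3 := by omega
  rcases hk with hk | hk | hk | hk
  · haveI := Fintype.card_eq_zero_iff.mp hk
    rw [Finset.univ_eq_empty, Finset.prod_empty] at hNcard
    omega
  · have e := Fintype.equivFinOfCardEq hk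
    have G := F.trans (myPiCongrLeft (fun i => Multiplicative (ZMod (n i))) e)
    have GG : A ≃* Multiplicative (ZMod (n (e.symm 0))) := G.trans (MulEquiv.piUnique _)
    have hm : n (e.symm 0) = Nat.card A := by
      rw [← hNcard, ← Equiv.prod_comp e.symm n, Fin.prod_univ_one]
    rcases hE with rfl | rfl
    · rcases dvd_four (hn _) (hq (e.symm 0)) with h0 | h0 <;> rw [h0] at GG hm <;>
      first
      | exact out_2 GG | exact out_4 GG | exact out_6 GG | exact out_22 GG
      | exact out_24 GG | exact out_42 GG | exact out_26 GG | exact out_62 GG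
      | exact out_23 GG | exact out_32 GG | exact out_222 GG | exact out_223 GG
      | exact out_232 GG | exact out_322 GG | omega
    · rcases dvd_six (hn _) (hq (e.symm 0)) with h0 | h0 | h0 <;> rw [h0] at GG hm <;>
      first
      | exact out_2 GG | exact out_4 GG | exact out_6 GG | exact out_22 GG
      | exact out_24 GG | exact out_42 GG | exact out_26 GG | exact out_62 GG
      | exact out_23 GG | exact out_32 GG | exact out_222 GG | exact out_223 GG
      | exact out_232 GG | exact out_322 GG | omega
  · have e := Fintype.equivFinOfCardEq hk
    have G := F.trans (myPiCongrLeft (fun i => Multiplicative (ZMod (n i))) e)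
    have GG : A ≃* Multiplicative (ZMod (n (e.symm 0))) × Multiplicative (ZMod (n (e.symm 1))) :=
      G.trans (myPiFin2 _)
    have hm : n (e.symm 0) * n (e.symm 1) = Nat.card A := by
      rw [← hNcard, ← Equiv.prod_comp e.symm n, Fin.prod_univ_two]
    rcases hE with rfl | rfl
    · rcases dvd_four (hn _) (hq (e.symm 0)) with h0 | h0 <;>
      rcases dvd_four (hn _) (hq (e.symm 1)) with h1 | h1 <;>
      rw [h0, h1] at GG hm <;>
      first
      | exact out_2 GG | exact out_4 GG | exact out_6 GG | exact out_22 GG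
      | exact out_24 GG | exact out_42 GG | exact out_26 GG | exact out_62 GG
      | exact out_23 GG | exact out_32 GG | exact out_222 GG | exact out_223 GG
      | exact out_232 GG | exact out_322 GG | omega
    · rcases dvd_six (hn _) (hq (e.symm 0)) with h0 | h0 | h0 <;>
      rcases dvd_six (hn _) (hq (e.symm 1)) with h1 | h1 | h1 <;>
      rw [h0, h1] at GG hm <;>
      first
      | exact out_2 GG | exact out_4 GG | exact out_6 GG | exact out_22 GG
      | exact out_24 GG | exact out_42 GG | exact out_26 GG | exact out_62 GG
      | exact out_23 GG | exact out_32 GG | exact out_222 GG | exact out_223 GG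
      | exact out_232 GG | exact out_322 GG | omega
  · have e := Fintype.equivFinOfCardEq hk
    have G := F.trans (myPiCongrLeft (fun i => Multiplicative (ZMod (n i))) e)
    have GG : A ≃* Multiplicative (ZMod (n (e.symm 0))) × Multiplicative (ZMod (n (e.symm 1))) ×
        Multiplicative (ZMod (n (e.symm 2))) := G.trans (myPiFin3 _)
    have hm : n (e.symm 0) * n (e.symm 1) * n (e.symm 2) = Nat.card A := by
      rw [← hNcard, ← Equiv.prod_comp e.symm n, Fin.prod_univ_three]
    rcases hE with rfl | rfl
    · rcases dvd_four (hn _) (hq (e.symm 0)) with h0 | h0 <;>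
      rcases dvd_four (hn _) (hq (e.symm 1)) with h1 | h1 <;>
      rcases dvd_four (hn _) (hq (e.symm 2)) with h2 | h2 <;>
      rw [h0, h1, h2] at GG hm <;>
      first
      | exact out_2 GG | exact out_4 GG | exact out_6 GG | exact out_22 GG
      | exact out_24 GG | exact out_42 GG | exact out_26 GG | exact out_62 GG
      | exact out_23 GG | exact out_32 GG | exact out_222 GG | exact out_223 GG
      | exact out_232 GG | exact out_322 GG | omega
    · rcases dvd_six (hn _) (hq (e.symm 0)) with h0 | h0 | h0 <;>
      rcases dvd_six (hn _) (hq (e.symm 1)) with h1 | h1 | h1 <;>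
      rcases dvd_six (hn _) (hq (e.symm 2)) with h2 | h2 | h2 <;>
      rw [h0, h1, h2] at GG hm <;>
      first
      | exact out_2 GG | exact out_4 GG | exact out_6 GG | exact out_22 GG
      | exact out_24 GG | exact out_42 GG | exact out_26 GG | exact out_62 GG
      | exact out_23 GG | exact out_32 GG | exact out_222 GG | exact out_223 GG
      | exact out_232 GG | exact out_322 GG | omega

private lemma pow_transfer {G : Type*} [Group G] {H : Subgroup G} {A : Type*} [Group A]
    (e : A ≃* H) {E : ℕ} (hG : ∀ g : G, g ^ E = 1) (a : A) : a ^ E = 1 := by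
  apply e.injective
  rw [map_pow, map_one]
  exact Subtype.ext (by rw [SubmonoidClass.coe_pow]; exact hG _)

private lemma not_comm_transfer {G : Type*} [Group G] {H : Subgroup G} {A : Type*}
    [CommGroup A] [Finite A] (e : A ≃* H) [Finite G] (hcard : Nat.card A = Nat.card G)
    (x y : G) : x * y = y * x := by
  have hH : H = ⊤ := Subgroup.eq_top_of_card_eq H ((Nat.card_congr e.toEquiv).symm.trans hcard)
  subst hH
  have F := e.trans Subgroup.topEquiv
  apply F.symm.injective
  rw [map_mul, map_mul]
  exact mul_comm _ _

/-- A finite abelian group of even order that is isomorphic to a subgroup of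
`C₂ × D₈` or of `C₂ × D₁₂` is isomorphic to one of
`C₂, C₄, C₆, C₂ × C₂, C₂ × C₄, C₂ × C₆, C₂ × C₂ × C₂`. -/
theorem stmt_9 (A : Type*) [CommGroup A] [Finite A] (hord : 2 ∣ Nat.card A)
    (h : (∃ H : Subgroup (Multiplicative (ZMod 2) × DihedralGroup 4),
            Nonempty (A ≃* H)) ∨
         (∃ H : Subgroup (Multiplicative (ZMod 2) × DihedralGroup 6),
            Nonempty (A ≃* H))) :
    Nonempty (A ≃* Multiplicative (ZMod 2)) ∨
    Nonempty (A ≃* Multiplicative (ZMod 4)) ∨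
    Nonempty (A ≃* Multiplicative (ZMod 6)) ∨
    Nonempty (A ≃* (Multiplicative (ZMod 2) × Multiplicative (ZMod 2))) ∨
    Nonempty (A ≃* (Multiplicative (ZMod 2) × Multiplicative (ZMod 4))) ∨
    Nonempty (A ≃* (Multiplicative (ZMod 2) × Multiplicative (ZMod 6))) ∨
    Nonempty (A ≃* (Multiplicative (ZMod 2) × Multiplicative (ZMod 2) ×
      Multiplicative (ZMod 2))) := by
  rcases h with ⟨H, ⟨e⟩⟩ | ⟨H, ⟨e⟩⟩
  · have hGpow : ∀ g : Multiplicative (ZMod 2) × DihedralGroup 4, g ^ 4 = 1 := by decide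
    have hG16 : Nat.card (Multiplicative (ZMod 2) × DihedralGroup 4) = 16 := by
      rw [Nat.card_eq_fintype_card]; decide
    have hdvd : Nat.card A ∣ 16 := by
      rw [Nat.card_congr e.toEquiv, ← hG16]
      exact H.card_subgroup_dvd_card
    have hne : Nat.card A ≠ 16 := fun hc => by
      have := not_comm_transfer e (hc.trans hG16.symm) (1, DihedralGroup.r 1)
        (1, DihedralGroup.sr 1)
      revert this; decide
    exact classify A (Or.inl (pow_transfer e hGpow)) (card_mem16 hord hdvd hne)
  · have hGpow : ∀ g : Multiplicative (ZMod 2) × DihedralGroup 6, g ^ 6 = 1 := by decide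
    have hG24 : Nat.card (Multiplicative (ZMod 2) × DihedralGroup 6) = 24 := by
      rw [Nat.card_eq_fintype_card]; decide
    have hdvd : Nat.card A ∣ 24 := by
      rw [Nat.card_congr e.toEquiv, ← hG24]
      exact H.card_subgroup_dvd_card
    have hne : Nat.card A ≠ 24 := fun hc => by
      have := not_comm_transfer e (hc.trans hG24.symm) (1, DihedralGroup.r 1)
        (1, DihedralGroup.sr 1)
      revert this; decide
    exact classify A (Or.inr (pow_transfer e hGpow)) (card_mem24 hord hdvd hne)
end

section
/- For every nonzero integer a, the complex number 64·(3a − 20i)³·(a − 4i)/(a² + 16)² has nonzero imaginary part; in particular, it is not a real number. -/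
open Complex

/-- For every nonzero integer `a`, the complex number
`64·(3a − 20i)³·(a − 4i)/(a² + 16)²` has nonzero imaginary part. -/
theorem stmt_12 (a : ℤ) (ha : a ≠ 0) :
    (64 * (3 * (a : ℂ) - 20 * I) ^ 3 * ((a : ℂ) - 4 * I) /
      ((a : ℂ) ^ 2 + 16) ^ 2).im ≠ 0 := by
  have hd : (((a:ℝ)^2 + 16)^2 : ℝ) ≠ 0 := by positivity
  have hcast : ((a : ℂ) ^ 2 + 16) ^ 2 = ((((a:ℝ)^2 + 16)^2 : ℝ) : ℂ) := by
    push_cast; ring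
  have hz : 64 * (3 * (a : ℂ) - 20 * I) ^ 3 * ((a : ℂ) - 4 * I)
      = (((64 * (27*(a:ℝ)^4 - 5760*(a:ℝ)^2 + 32000) : ℝ)) : ℂ)
        + (((64 * (-648*(a:ℝ)^3 + 22400*(a:ℝ)) : ℝ)) : ℂ) * I := by
    push_cast
    linear_combination (64*(5760*(a:ℂ)^2 - 22400*(a:ℂ)*I + 32000*(I^2-1))) * Complex.I_sq
  rw [hcast, div_ofReal_im, hz]
  simp only [add_im, ofReal_im, mul_im, ofReal_re, I_im, I_re, mul_zero, mul_one, zero_add,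
    add_zero]
  rw [div_ne_zero_iff]
  refine ⟨?_, hd⟩
  intro h
  have h' : (41472 : ℝ) * (a:ℝ)^3 = 1433600 * (a:ℝ) := by nlinarith [h]
  have ha' : (a:ℝ) ≠ 0 := by exact_mod_cast Int.cast_ne_zero.mpr ha
  have h2 : (41472 : ℝ) * (a:ℝ)^2 = 1433600 := by
    have hfac : (a:ℝ) * (41472 * (a:ℝ)^2 - 1433600) = 0 := by linear_combination h'
    rcases mul_eq_zero.mp hfac with h0 | h0
    · exact absurd h0 ha'
    · linarith
  have h3 : (41472 : ℤ) * a^2 = 1433600 := by exact_mod_cast h2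
  have hb : 0 ≤ a^2 := sq_nonneg a
  set b := a^2 with hbdef
  omega
end
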